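/- arXiv:0902.2718 — 7 statements merged into one kernel-verified Lean document; each statement's English description precedes it below -/
import Mathlib

section
/- For every $x > 0$, the function $h(y) = \operatorname{arsinh}(1/\sinh(y))$ satisfies $h^{-1}(x) \le 1/x$; equivalently, for all $x > 0$ we have $h(1/x) \le x$, i.e., $\operatorname{arsinh}(1/\sinh(1/x)) \le x$. -/
open Real

theorem mul_le_sinh_mul_sinh {x y : ℝ} (hx : 0 ≤ x) (hy : 0 ≤ y) : x * y ≤ sinh x * sinh y :=
  mul_le_mul (self_le_sinh_iff.2 hx) (self_le_sinh_iff.2 hy) hy (sinh_nonneg_iff.2 hx)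

theorem one_le_sinh_mul_sinh_inv {x : ℝ} (hx : 0 < x) : 1 ≤ sinh x * sinh x⁻¹ := by
  simpa [hx.ne'] using mul_le_sinh_mul_sinh hx.le (inv_nonneg.2 hx.le)

/-- For every `x > 0`, `h(1/x) ≤ x` where `h(y) = arsinh (1 / sinh y)`;
equivalently `h⁻¹(x) ≤ 1/x`. -/
theorem stmt2 : ∀ x : ℝ, 0 < x → arsinh (1 / sinh (1 / x)) ≤ x := by
  intro x hx
  have hsinh : 0 < sinh (1 / x) := sinh_pos_iff.2 (one_div_pos.2 hx)
  have hrecip : 1 / sinh (1 / x) ≤ sinh x := by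
    rw [div_le_iff₀ hsinh, one_div]
    exact one_le_sinh_mul_sinh_inv hx
  calc arsinh (1 / sinh (1 / x)) ≤ arsinh (sinh x) := arsinh_le_arsinh.2 hrecip
    _ = x := arsinh_sinh x
end

section
/- Let $T$ be a tree (a connected acyclic simple graph) and let $\mathrm{Lab} : V(T) \to \mathcal{P}(\{1,\dots,N\})$ be any labelling. Define the canonical extension $\overline{\mathrm{Lab}}(x) = \bigcup \{\mathrm{Lab}(a) \cap \mathrm{Lab}(b) : x \text{ lies on the path } [ab]\}$. Then $\overline{\mathrm{Lab}}$ satisfies the connectedness property: for all vertices $a, b$ and any vertex $x$ on the path $[ab]$, $\overline{\mathrm{Lab}}(a) \cap \overline{\mathrm{Lab}}(b) \subseteq \overline{\mathrm{Lab}}(x)$. -/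
/-
In an acyclic graph a vertex on the path `[uv]` lies on every walk from `u` to `v`, because
bypassing the walk gives back `[uv]`. Let `i` label `a` and `b` canonically, via a path
`[a₂b₂]` through `b` with `i ∈ Lab a₂ ∩ Lab b₂`. Going from `a` to `a₂` and then along
`[a₂b₂]` to `b` shows that `x` lies on `[a₂b₂]` or on `[a a₂]`. In the second case, with
`[a₁b₁]` a path through `a` witnessing `i` at `a`, going from `a` back to `a₁` and then to `a₂`
puts `x` on `[a₁b₁]` or on `[a₁a₂]`, whose ends all carry `i`.
-/

open SimpleGraph

/-- The canonical extension of a labelling of a tree: `i` labels `x` iff `x`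
lies on a path between two vertices both labelled `i`. -/
def canonicalExt {V : Type*} (G : SimpleGraph V) {N : ℕ}
    (Lab : V → Set (Fin N)) (x : V) : Set (Fin N) :=
  {i | ∃ (a b : V) (p : G.Walk a b), p.IsPath ∧ x ∈ p.support ∧
    i ∈ Lab a ∧ i ∈ Lab b}

namespace SimpleGraph

variable {V : Type*} {G : SimpleGraph V}

theorem IsAcyclic.mem_support_of_mem_support_isPath (hG : G.IsAcyclic) {u v x : V}
    {p : G.Walk u v} (hp : p.IsPath) (hx : x ∈ p.support) (q : G.Walk u v) :
    x ∈ q.support := by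
  classical
  have hpq : p = q.bypass :=
    congrArg Subtype.val ((hG.subsingleton_path u v).elim ⟨p, hp⟩ ⟨_, q.bypass_isPath⟩)
  exact q.support_bypass_subset_support (hpq ▸ hx)

theorem IsAcyclic.mem_support_or_mem_support_of_isPath (hG : G.IsAcyclic) {u v w x : V}
    {p : G.Walk u v} (hp : p.IsPath) (hx : x ∈ p.support) (q : G.Walk u w) (r : G.Walk w v) :
    x ∈ q.support ∨ x ∈ r.support :=
  (Walk.mem_support_append_iff q r).1 (hG.mem_support_of_mem_support_isPath hp hx _)

end SimpleGraph

theorem mem_canonicalExt_of_isPath {V : Type*} {G : SimpleGraph V} {N : ℕ}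
    {Lab : V → Set (Fin N)} (hG : G.IsTree) {a c x : V} {p : G.Walk a c}
    (hp : p.IsPath) (hx : x ∈ p.support) {i : Fin N} (ha : i ∈ canonicalExt G Lab a)
    (hc : i ∈ Lab c) : i ∈ canonicalExt G Lab x := by
  classical
  obtain ⟨a₁, b₁, p₁, hp₁, ha₁, hia₁, hib₁⟩ := ha
  obtain ⟨s, hs⟩ := hG.connected.exists_isPath a₁ c
  rcases hG.isAcyclic.mem_support_or_mem_support_of_isPath hp hx
      (p₁.takeUntil a ha₁).reverse s with hx₁ | hxs
  · rw [Walk.support_reverse, List.mem_reverse] at hx₁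
    exact ⟨a₁, b₁, p₁, hp₁, p₁.support_takeUntil_subset_support ha₁ hx₁, hia₁, hib₁⟩
  · exact ⟨a₁, c, s, hs, hxs, hia₁, hc⟩

/-- The canonical extension of any labelling of a tree satisfies the
connectedness property (Property A): labels shared by two vertices appear at
every vertex on the path between them. -/
theorem stmt6 {V : Type*} (G : SimpleGraph V) (hG : G.IsTree) {N : ℕ}
    (Lab : V → Set (Fin N)) :
    ∀ (a b x : V) (p : G.Walk a b), p.IsPath → x ∈ p.support →
      canonicalExt G Lab a ∩ canonicalExt G Lab b ⊆ canonicalExt G Lab x := by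
  classical
  intro a b x p hp hx i ⟨hia, hib⟩
  obtain ⟨a₂, b₂, p₂, hp₂, hb₂, hia₂, hib₂⟩ := hib
  obtain ⟨w, hw⟩ := hG.connected.exists_isPath a a₂
  rcases hG.isAcyclic.mem_support_or_mem_support_of_isPath hp hx w (p₂.takeUntil b hb₂)
    with hxw | hx₂
  · exact mem_canonicalExt_of_isPath hG hw hxw hia hia₂
  · exact ⟨a₂, b₂, p₂, hp₂, p₂.support_takeUntil_subset_support hb₂ hx₂, hia₂, hib₂⟩
end

section
/- Let $T$ be a tree with labelling $\mathrm{Lab}$ and let $\overline{\mathrm{Lab}}$ be its canonical extension. If a vertex $v$ lies on the path $[ab]$ and $i \in \overline{\mathrm{Lab}}(a) \cap \overline{\mathrm{Lab}}(b)$, then there exist vertices $a', b'$ such that $v$ lies on the path $[a'b']$ and $i \in \mathrm{Lab}(a') \cap \mathrm{Lab}(b')$. -/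
/-!
In a tree the path `[ab]` lies in `[ac] ∪ [cb]` for every vertex `c`. Say `i` is a label of
both ends of a path `[a₁b₁]` through `a`. If `v` is not on `[a₁b₁]`, it is not on `[aa₁]`,
so `v ∈ [a₁b]`. Repeating this at `b` with a path `[a₂b₂]` through `b` gives `v ∈ [a₂a₁]`.
-/

open SimpleGraph

namespace SimpleGraph.IsAcyclic

variable {V : Type*} {G : SimpleGraph V} {a b c v : V}

theorem support_subset_of_isPath (hG : G.IsAcyclic) {p : G.Walk a b} (hp : p.IsPath)
    (q : G.Walk a b) : p.support ⊆ q.support := by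
  classical
  rw [Subtype.mk.inj <| hG.subsingleton_path a b |>.elim ⟨p, hp⟩ ⟨q.bypass, q.bypass_isPath⟩]
  exact q.support_bypass_subset_support

theorem exists_isPath_mem_support_of_notMem (hG : G.IsAcyclic) {p : G.Walk a b}
    (hp : p.IsPath) (hv : v ∈ p.support) (q : G.Walk a c) (hvq : v ∉ q.support) :
    ∃ r : G.Walk c b, r.IsPath ∧ v ∈ r.support := by
  classical
  let r := (q.reverse.append p).bypass
  have hvqr : v ∈ (q.append r).support := hG.support_subset_of_isPath hp _ hv
  rw [Walk.mem_support_append_iff] at hvqr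
  exact ⟨r, Walk.bypass_isPath _, hvqr.resolve_left hvq⟩

theorem exists_of_mem_canonicalExt (hG : G.IsAcyclic) {N : ℕ} {Lab : V → Set (Fin N)}
    {i : Fin N} {p : G.Walk a b} (hp : p.IsPath) (hv : v ∈ p.support)
    (hia : i ∈ canonicalExt G Lab a) :
    (∃ (a' b' : V) (q : G.Walk a' b'), q.IsPath ∧ v ∈ q.support ∧ i ∈ Lab a' ∧ i ∈ Lab b') ∨
      ∃ (a' : V) (q : G.Walk a' b), q.IsPath ∧ v ∈ q.support ∧ i ∈ Lab a' := by
  classical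
  obtain ⟨a₁, b₁, p₁, hp₁, ha, hi₁, hi₂⟩ := hia
  by_cases hv₁ : v ∈ p₁.support
  · exact .inl ⟨a₁, b₁, p₁, hp₁, hv₁, hi₁, hi₂⟩
  have hv₁' : v ∉ (p₁.takeUntil a ha).reverse.support := by
    rw [Walk.support_reverse, List.mem_reverse]
    exact fun h ↦ hv₁ (p₁.support_takeUntil_subset_support ha h)
  obtain ⟨r, hr, hvr⟩ := hG.exists_isPath_mem_support_of_notMem hp hv _ hv₁'
  exact .inr ⟨a₁, r, hr, hvr, hi₁⟩

end SimpleGraph.IsAcyclic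

/-- If `v` lies on the path `[ab]` and `i` belongs to the canonical extension
labels of both `a` and `b`, then there are vertices `a'`, `b'` with `v` on the
path `[a'b']` and `i` an original label of both `a'` and `b'`. -/
theorem stmt7 {V : Type*} (G : SimpleGraph V) (hG : G.IsTree) {N : ℕ}
    (Lab : V → Set (Fin N)) (a b v : V) (p : G.Walk a b)
    (hp : p.IsPath) (hv : v ∈ p.support) (i : Fin N)
    (hia : i ∈ canonicalExt G Lab a) (hib : i ∈ canonicalExt G Lab b) :
    ∃ (a' b' : V) (q : G.Walk a' b'), q.IsPath ∧ v ∈ q.support ∧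
      i ∈ Lab a' ∧ i ∈ Lab b' := by
  obtain h | ⟨a₁, r, hr, hvr, hi₁⟩ := hG.isAcyclic.exists_of_mem_canonicalExt hp hv hia
  · exact h
  have hvr' : v ∈ r.reverse.support := by rwa [Walk.support_reverse, List.mem_reverse]
  obtain h | ⟨a₂, r', hr', hvr'', hi₂⟩ :=
    hG.isAcyclic.exists_of_mem_canonicalExt hr.reverse hvr' hib
  · exact h
  exact ⟨a₂, a₁, r', hr', hvr'', hi₂, hi₁⟩
end

section
/- Let $T$ be a tree with labelling $\mathrm{Lab}$. If $\mathrm{Lab}$ is surjective (every index $i \in \{1,\dots,N\}$ occurs in the label set of some vertex), then its canonical extension $\overline{\mathrm{Lab}}$ is both surjective and satisfies the connectedness property, i.e., is a labelling system. -/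
/-! In a tree, `canonicalExt G Lab` places the index `i` exactly on the convex hull of the
vertices whose label contains `i`, and convex hulls in a tree are convex: if `x` lies on the path
from `a` to `b`, where `a` lies on the path between `a₁, b₁` and `b` on the path between
`a₂, b₂` (all four labelled by `i`), then by the triangle inclusion `[a b] ⊆ [a b₂] ∪ [b₂ b]`
and `[a b₂] ⊆ [a a₁] ∪ [a₁ b₂]` the vertex `x` lies on one of the paths `[a₁ b₁]`, `[a₁ b₂]`,
`[a₂ b₂]`. -/

open SimpleGraph

namespace SimpleGraph

variable {V : Type*} {G : SimpleGraph V} {a b c x : V}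

/-- The paper's `x ∈ [a b]`. -/
def OnPath (G : SimpleGraph V) (a b x : V) : Prop :=
  ∃ p : G.Walk a b, p.IsPath ∧ x ∈ p.support

lemma onPath_self (G : SimpleGraph V) (a : V) : G.OnPath a a a :=
  ⟨.nil, .nil, Walk.start_mem_support _⟩

lemma OnPath.symm (h : G.OnPath a b x) : G.OnPath b a x := by
  obtain ⟨p, hp, hx⟩ := h
  exact ⟨p.reverse, hp.reverse, by rwa [Walk.support_reverse, List.mem_reverse]⟩

lemma IsAcyclic.mem_support_of_onPath (hG : G.IsAcyclic) (hx : G.OnPath a b x)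
    {p : G.Walk a b} (hp : p.IsPath) : x ∈ p.support := by
  obtain ⟨q, hq, hxq⟩ := hx
  have hqp : q = p := congrArg Subtype.val ((hG.subsingleton_path a b).elim ⟨q, hq⟩ ⟨p, hp⟩)
  exact hqp ▸ hxq

lemma IsAcyclic.onPath_of_onPath_of_onPath (hG : G.IsAcyclic) (hc : G.OnPath a b c)
    (hx : G.OnPath a c x) : G.OnPath a b x := by
  classical
  obtain ⟨p, hp, hcp⟩ := hc
  have hxc : x ∈ (p.takeUntil c hcp).support :=
    hG.mem_support_of_onPath hx (hp.takeUntil hcp)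
  exact ⟨p, hp, p.support_takeUntil_subset_support hcp hxc⟩

lemma IsAcyclic.onPath_or_onPath (hG : G.IsAcyclic) (hac : G.Reachable a c)
    (hcb : G.Reachable c b) (hx : G.OnPath a b x) : G.OnPath a c x ∨ G.OnPath c b x := by
  classical
  obtain ⟨q, hq⟩ := hac.exists_isPath
  obtain ⟨r, hr⟩ := hcb.exists_isPath
  have hxqr : x ∈ (q.append r).support :=
    (q.append r).support_bypass_subset_support
      (hG.mem_support_of_onPath hx (q.append r).bypass_isPath)
  rcases (Walk.mem_support_append_iff q r).mp hxqr with hxq | hxr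
  · exact .inl ⟨q, hq, hxq⟩
  · exact .inr ⟨r, hr, hxr⟩

end SimpleGraph

section canonicalExt

variable {V : Type*} {G : SimpleGraph V} {N : ℕ} {Lab : V → Set (Fin N)} {i : Fin N} {x : V}

lemma mem_canonicalExt :
    i ∈ canonicalExt G Lab x ↔ ∃ a b, G.OnPath a b x ∧ i ∈ Lab a ∧ i ∈ Lab b :=
  ⟨fun ⟨a, b, p, hp, hx, ha, hb⟩ ↦ ⟨a, b, ⟨p, hp, hx⟩, ha, hb⟩,
    fun ⟨a, b, ⟨p, hp, hx⟩, ha, hb⟩ ↦ ⟨a, b, p, hp, hx, ha, hb⟩⟩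

lemma subset_canonicalExt (G : SimpleGraph V) (Lab : V → Set (Fin N)) (x : V) :
    Lab x ⊆ canonicalExt G Lab x :=
  fun _ hi ↦ mem_canonicalExt.mpr ⟨x, x, G.onPath_self x, hi, hi⟩

lemma SimpleGraph.IsTree.mem_canonicalExt_of_onPath (hG : G.IsTree) {a b : V}
    (hx : G.OnPath a b x) (ha : i ∈ canonicalExt G Lab a) (hb : i ∈ canonicalExt G Lab b) :
    i ∈ canonicalExt G Lab x := by
  obtain ⟨a₁, b₁, ha', hia₁, hib₁⟩ := mem_canonicalExt.mp ha
  obtain ⟨a₂, b₂, hb', hia₂, hib₂⟩ := mem_canonicalExt.mp hb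
  have hA := hG.isAcyclic
  have hR : ∀ u v : V, G.Reachable u v := hG.connected.preconnected
  refine mem_canonicalExt.mpr ?_
  rcases hA.onPath_or_onPath (hR a b₂) (hR b₂ b) hx with hx₁ | hx₁
  · rcases hA.onPath_or_onPath (hR a a₁) (hR a₁ b₂) hx₁ with hx₂ | hx₂
    · exact ⟨a₁, b₁, hA.onPath_of_onPath_of_onPath ha' hx₂.symm, hia₁, hib₁⟩
    · exact ⟨a₁, b₂, hx₂, hia₁, hib₂⟩
  · exact ⟨a₂, b₂, (hA.onPath_of_onPath_of_onPath hb'.symm hx₁).symm, hia₂, hib₂⟩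

end canonicalExt

/-- If a labelling of a tree is surjective, then its canonical extension is a
labelling system: it is surjective and satisfies the connectedness property. -/
theorem stmt8 {V : Type*} (G : SimpleGraph V) (hG : G.IsTree) {N : ℕ}
    (Lab : V → Set (Fin N))
    (hsurj : ∀ i : Fin N, ∃ v : V, i ∈ Lab v) :
    (∀ i : Fin N, ∃ v : V, i ∈ canonicalExt G Lab v) ∧
    (∀ (a b x : V) (p : G.Walk a b), p.IsPath → x ∈ p.support →
      canonicalExt G Lab a ∩ canonicalExt G Lab b ⊆ canonicalExt G Lab x) := by
  refine ⟨fun i ↦ ?_, fun a b x p hp hx i ⟨ha, hb⟩ ↦ ?_⟩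
  · obtain ⟨v, hv⟩ := hsurj i
    exact ⟨v, subset_canonicalExt G Lab v hv⟩
  · exact hG.mem_canonicalExt_of_onPath ⟨p, hp, hx⟩ ha hb
end

section
/- Let $T$ be a finite simplicial tree with a labelling system $\mathrm{Lab} : V(T) \to \mathcal{P}(\{1,\dots,N\})$. If every edge of $T$ is useless, then there exists a full vertex $z$ with $\mathrm{Lab}(z) = \{1,\dots,N\}$. -/
open SimpleGraph

/-- `x` lies in the component of `u` obtained by removing the open edge `uv`
from the tree `G`: every path from `x` to `v` passes through `u`. -/
def OnSide {V : Type*} (G : SimpleGraph V) (u v x : V) : Prop :=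
  ∀ p : G.Walk x v, p.IsPath → u ∈ p.support

/-- The component of `u` (after removing the edge `uv`) carries all labels. -/
def SideFull {V : Type*} (G : SimpleGraph V) {N : ℕ}
    (Lab : V → Set (Fin N)) (u v : V) : Prop :=
  ∀ i : Fin N, ∃ x : V, OnSide G u v x ∧ i ∈ Lab x

/-- An edge `uv` is useless if one of the two components obtained by removing
it carries all labels. -/
def Useless {V : Type*} (G : SimpleGraph V) {N : ℕ}
    (Lab : V → Set (Fin N)) (u v : V) : Prop :=
  SideFull G Lab u v ∨ SideFull G Lab v u

/-!
Orient each edge towards a side carrying all labels. Every such orientation of a finite tree has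
a sink `u`: otherwise, among the full sides choose one of least cardinality, say the `u`-side of
`uv`; an edge `uw` not oriented towards `u` is oriented towards `w`, and the `w`-side of `wu` is
strictly smaller. At a sink every label `i` is carried by the `u`-side of the first edge `uw` of
the path from `u` to a vertex `x` labelled `i`, and the path from that side to `x` passes
through `u`, so `i ∈ Lab u` by the convexity condition (A).
-/

namespace SimpleGraph

variable {V : Type*} {G : SimpleGraph V} {u v w x y : V}

lemma onSide_self : OnSide G u v u := fun p _ => p.start_mem_support

lemma not_onSide_self_of_ne (h : u ≠ v) : ¬OnSide G u v v := fun hv =>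
  h (by simpa using hv Walk.nil Walk.IsPath.nil)

lemma OnSide.mem_support (hx : OnSide G u v x) (p : G.Walk x v) : u ∈ p.support := by
  classical
  exact p.support_bypass_subset_support (hx _ p.bypass_isPath)

lemma OnSide.mem_support_of_onSide (hG : G.Preconnected) {z : V} (hzw : z ≠ w)
    (hy : OnSide G z w y) (hx : OnSide G w z x) (p : G.Walk y x) : z ∈ p.support := by
  classical
  by_contra hz
  obtain ⟨q, hq⟩ := (hG x z).exists_isPath
  have hwq : w ∈ q.support := hx q hq
  have hzq : z ∉ (q.takeUntil w hwq).support :=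
    Walk.endpoint_notMem_support_takeUntil hq hwq hzw
  have := hy.mem_support (p.append (q.takeUntil w hwq))
  rw [Walk.mem_support_append_iff] at this
  tauto

lemma IsAcyclic.onSide_of_isPath_cons (hG : G.IsAcyclic) {h : G.Adj u w} {q : G.Walk w x}
    (hp : (Walk.cons h q).IsPath) : OnSide G w u x := by
  intro r hr
  have : r.reverse = Walk.cons h q :=
    congrArg Subtype.val ((hG.subsingleton_path u x).elim ⟨_, hr.reverse⟩ ⟨_, hp⟩)
  rw [← Walk.reverse_reverse r, this, Walk.support_reverse]
  simp

lemma IsAcyclic.onSide_of_onSide (hG : G.IsAcyclic) (huv : G.Adj u v) (huw : G.Adj u w)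
    (hwv : w ≠ v) (hx : OnSide G w u x) : OnSide G u v x := by
  intro p hp
  by_contra hu
  have hq : (Walk.cons huv p.reverse).IsPath := by
    rw [Walk.cons_isPath_iff, Walk.support_reverse, List.mem_reverse]
    exact ⟨hp.reverse, hu⟩
  have hwq := hx _ hq.reverse
  rw [Walk.support_reverse, List.mem_reverse] at hwq
  exact hwv ((hG.eq_snd_of_adj_start hq huw hwq).trans (Walk.snd_cons ..))

lemma IsAcyclic.setOf_onSide_ssubset (hG : G.IsAcyclic) (huv : G.Adj u v) (huw : G.Adj u w)
    (hwv : w ≠ v) : {x | OnSide G w u x} ⊂ {x | OnSide G u v x} :=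
  (Set.ssubset_iff_of_subset fun _ => hG.onSide_of_onSide huv huw hwv).2
    ⟨u, onSide_self, not_onSide_self_of_ne huw.ne'⟩

theorem IsAcyclic.exists_forall_adj_of_forall_adj_or [Finite V] [Nonempty V]
    (hG : G.IsAcyclic) {R : V → V → Prop} (hR : ∀ u v, G.Adj u v → R u v ∨ R v u) :
    ∃ u, ∀ w, G.Adj u w → R u w := by
  by_contra! hsink
  have hne : {e : V × V | G.Adj e.1 e.2 ∧ R e.1 e.2}.Nonempty := by
    obtain ⟨w, huw, hR'⟩ := hsink (Classical.arbitrary V)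
    exact ⟨(w, _), huw.symm, (hR _ w huw).resolve_left hR'⟩
  obtain ⟨⟨u, v⟩, ⟨huv, hRuv⟩, hmin⟩ :=
    Set.exists_min_image _ (fun e => {x | OnSide G e.1 e.2 x}.ncard) (Set.toFinite _) hne
  obtain ⟨w, huw, hRuw⟩ := hsink u
  have hwv : w ≠ v := by
    rintro rfl
    exact hRuw hRuv
  have hlt := Set.ncard_lt_ncard (hG.setOf_onSide_ssubset huv huw hwv)
  exact (hmin (w, u) ⟨huw.symm, (hR u w huw).resolve_left hRuw⟩).not_gt hlt

lemma IsTree.eq_univ_of_forall_adj_sideFull (hG : G.IsTree) {N : ℕ} {Lab : V → Set (Fin N)}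
    (hA : ∀ (a b x : V) (p : G.Walk a b), p.IsPath → x ∈ p.support → Lab a ∩ Lab b ⊆ Lab x)
    (hB : ∀ i : Fin N, ∃ v : V, i ∈ Lab v) (hu : ∀ w, G.Adj u w → SideFull G Lab u w) :
    Lab u = Set.univ := by
  refine Set.eq_univ_of_forall fun i => ?_
  obtain ⟨x, hx⟩ := hB i
  obtain ⟨p, hp⟩ := (hG.connected.preconnected u x).exists_isPath
  cases p with
  | nil => exact hx
  | cons huw q =>
    obtain ⟨y, hy, hiy⟩ := hu _ huw i
    obtain ⟨r, hr⟩ := (hG.connected.preconnected y x).exists_isPath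
    have hur : u ∈ r.support :=
      hy.mem_support_of_onSide hG.connected.preconnected huw.ne
        (hG.isAcyclic.onSide_of_isPath_cons hp) r
    exact hA y x u r hr hur ⟨hiy, hx⟩

end SimpleGraph

/-- If every edge of a finite tree with a labelling system is useless, then
there exists a full vertex. -/
theorem stmt10 {V : Type*} [Fintype V] (G : SimpleGraph V) (hG : G.IsTree)
    {N : ℕ} (Lab : V → Set (Fin N))
    (hA : ∀ (a b x : V) (p : G.Walk a b), p.IsPath → x ∈ p.support →
      Lab a ∩ Lab b ⊆ Lab x)
    (hB : ∀ i : Fin N, ∃ v : V, i ∈ Lab v)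
    (huseless : ∀ u v : V, G.Adj u v → Useless G Lab u v) :
    ∃ z : V, Lab z = Set.univ := by
  have : Nonempty V := hG.connected.nonempty
  obtain ⟨u, hu⟩ := hG.isAcyclic.exists_forall_adj_of_forall_adj_or huseless
  exact ⟨u, hG.eq_univ_of_forall_adj_sideFull hA hB hu⟩
end

section
/- Let $T$ be a finite simplicial tree with labelling system $\mathrm{Lab}$ and let $T_{\mathrm{spl}}$ be the (nonempty) subtree of useful edges. Then the restriction of $\mathrm{Lab}$ to the vertices of $T_{\mathrm{spl}}$ is surjective: $\bigcup_{v \in T_{\mathrm{spl}}} \mathrm{Lab}(v) = \{1,\dots,N\}$. -/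
/-!
Fix a label `i`, a vertex `s` carrying it and a useful edge `vu`, and follow the path from `v`
through `u` to `s`. If `i ∉ Lab u`, the next edge `uw` of the path is useful again: the `w`-side
of `uw` lies inside the `u`-side of `vu`, which misses some label, and a vertex carrying `i` on
the `u`-side of `uw` would force `i ∈ Lab u` by (A), because the path from it to `s` runs
through `u`. Walking on, we meet `i` at an endpoint of a useful edge, at the latest at `s`.
-/

open SimpleGraph

section

variable {V : Type*} {G : SimpleGraph V} {N : ℕ} {Lab : V → Set (Fin N)}

theorem OnSide.mem_support_of_walk {u v x : V} (hx : OnSide G u v x) (p : G.Walk x v) :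
    u ∈ p.support := by
  classical
  exact p.support_bypass_subset_support (hx _ p.bypass_isPath)

theorem OnSide.of_adj_adj (hG : G.IsAcyclic) {u v w x : V} (hvu : G.Adj v u) (huw : G.Adj u w)
    (hwv : w ≠ v) (hx : OnSide G w u x) : OnSide G u v x := by
  intro r hr
  by_contra hu
  have hp := hr.concat hu hvu
  have hw : w ∈ (r.concat hvu).support := hx _ hp
  have hv : v ∈ (r.concat hvu).support := by simp
  -- `v` and `w` are neighbours of `u` on a path ending at `u`: both are its penultimate vertex
  exact hwv ((hG.eq_penultimate_of_adj_end hp huw hw).trans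
    (hG.eq_penultimate_of_adj_end hp hvu.symm hv).symm)

theorem SideFull.of_adj_adj (hG : G.IsAcyclic) {u v w : V} (hvu : G.Adj v u) (huw : G.Adj u w)
    (hwv : w ≠ v) (hfull : SideFull G Lab w u) : SideFull G Lab u v := fun i => by
  obtain ⟨x, hx, hix⟩ := hfull i
  exact ⟨x, hx.of_adj_adj hG hvu huw hwv, hix⟩

theorem mem_lab_of_onSide (hconn : G.Preconnected)
    (hA : ∀ (a b x : V) (p : G.Walk a b), p.IsPath → x ∈ p.support → Lab a ∩ Lab b ⊆ Lab x)
    {i : Fin N} {u w x s : V} (hx : OnSide G u w x) (q : G.Walk w s) (hu : u ∉ q.support)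
    (hix : i ∈ Lab x) (his : i ∈ Lab s) : i ∈ Lab u := by
  classical
  obtain ⟨p⟩ := hconn x s
  have hmem := hx.mem_support_of_walk (p.bypass.append q.reverse)
  rw [Walk.support_append, Walk.support_reverse, List.mem_append] at hmem
  have hup : u ∈ p.bypass.support :=
    hmem.resolve_right fun h => hu (List.mem_reverse.mp (List.mem_of_mem_tail h))
  exact hA x s u p.bypass p.bypass_isPath hup ⟨hix, his⟩

theorem exists_useful_mem_lab_of_isPath (hconn : G.Preconnected) (hG : G.IsAcyclic)
    (hA : ∀ (a b x : V) (p : G.Walk a b), p.IsPath → x ∈ p.support → Lab a ∩ Lab b ⊆ Lab x)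
    {i : Fin N} {s : V} (his : i ∈ Lab s) :
    ∀ {u v : V} (q : G.Walk u s) (hvu : G.Adj v u), (Walk.cons hvu q).IsPath →
      ¬ Useless G Lab u v → ∃ a : V, (∃ w : V, G.Adj a w ∧ ¬ Useless G Lab a w) ∧ i ∈ Lab a
  | u, v, .nil, hvu, _, huse => ⟨u, ⟨v, hvu.symm, huse⟩, his⟩
  | u, v, .cons (v := w) huw q, hvu, hp, huse => by
    by_cases hiu : i ∈ Lab u
    · exact ⟨u, ⟨v, hvu.symm, huse⟩, hiu⟩
    have hp' : (Walk.cons huw q).IsPath := hp.of_cons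
    have hwv : w ≠ v := by
      rintro rfl
      exact ((Walk.cons_isPath_iff _ _).mp hp).2 (by simp)
    have huq : u ∉ q.support := ((Walk.cons_isPath_iff _ _).mp hp').2
    refine exists_useful_mem_lab_of_isPath hconn hG hA his q huw hp' ?_
    rintro (hfull | hfull)
    · exact huse (Or.inl (hfull.of_adj_adj hG hvu huw hwv))
    · obtain ⟨x, hx, hix⟩ := hfull i
      exact hiu (mem_lab_of_onSide hconn hA hx q huq hix his)

end

theorem stmt13_general {V : Type*} (G : SimpleGraph V) (hG : G.IsTree)
    {N : ℕ} (Lab : V → Set (Fin N))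
    (hA : ∀ (a b x : V) (p : G.Walk a b), p.IsPath → x ∈ p.support →
      Lab a ∩ Lab b ⊆ Lab x)
    (hB : ∀ i : Fin N, ∃ v : V, i ∈ Lab v)
    (hne : ∃ u v : V, G.Adj u v ∧ ¬ Useless G Lab u v) :
    ∀ i : Fin N, ∃ v : V,
      (∃ w : V, G.Adj v w ∧ ¬ Useless G Lab v w) ∧ i ∈ Lab v := by
  intro i
  obtain ⟨u, v, huv, huse⟩ := hne
  obtain ⟨s, his⟩ := hB i
  obtain ⟨p, hp, -⟩ := hG.existsUnique_path v s
  by_cases hu : u ∈ p.support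
  · have hsnd : u = p.snd := hG.2.eq_snd_of_adj_start hp huv.symm hu
    have hnil : ¬ p.Nil := fun h => huv.ne (by simpa [Walk.nil_iff_support_eq.mp h] using hu)
    rw [← p.cons_tail_eq hnil] at hp
    rw [hsnd] at huse
    exact exists_useful_mem_lab_of_isPath hG.1.preconnected hG.2 hA his p.tail _ hp huse
  · exact exists_useful_mem_lab_of_isPath hG.1.preconnected hG.2 hA his p huv (hp.cons hu)
      fun h => huse h.symm

/-- If the subtree of useful edges is nonempty, then the restriction of the
labelling system to the vertices of useful edges is surjective. -/
theorem stmt13 {V : Type*} [Fintype V] (G : SimpleGraph V) (hG : G.IsTree)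
    {N : ℕ} (Lab : V → Set (Fin N))
    (hA : ∀ (a b x : V) (p : G.Walk a b), p.IsPath → x ∈ p.support →
      Lab a ∩ Lab b ⊆ Lab x)
    (hB : ∀ i : Fin N, ∃ v : V, i ∈ Lab v)
    (hne : ∃ u v : V, G.Adj u v ∧ ¬ Useless G Lab u v) :
    ∀ i : Fin N, ∃ v : V,
      (∃ w : V, G.Adj v w ∧ ¬ Useless G Lab v w) ∧ i ∈ Lab v :=
  stmt13_general G hG Lab hA hB hne
end

section
/- Let $X$ be a finite subset of a $\delta$-hyperbolic geodesic space with $|X| \le 2^c + 2$, and let $(T, p)$ be a Gromov approximating tree for $X$, so that $p$ does not increase distances and $d(x_1,x_2) - 2c\delta \le d_T(p(x_1), p(x_2))$ for all $x_1, x_2 \in X$. For a triangle $\Delta = [x_1 x_2 x_3]$ with $x_i \in X$, the restriction of the natural extension $p_\Delta$ to a side $[x_i x_j]$ of $\Delta$ (defined as the dilation onto the corresponding segment of the tripod $T_\Delta = [p(x_1)p(x_2)p(x_3)] \subseteq T$ matching internal points to the branch point) is a $(1, 4c\delta)$-quasi-isometric embedding: for all $y, z \in [x_i x_j]$, $d(y,z)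 - 4c\delta \le d_T(p_\Delta(y), p_\Delta(z)) \le d(y,z) + 4c\delta$. -/
/-!
On each half of the side, `f t - t` is a convex combination of two of the three numbers
`0`, `β - α` and `t₁₂ - L`: the displacements of `f` at `0`, at the internal point and at
`L`. The two-sided tree estimates put all three in `[-2cδ, 2cδ]`, so the displacement
`f t - t` stays in that interval on the whole side, and two displacements differ by at
most `4cδ`.
-/

open Set

noncomputable def sideDilation (a b L T t : ℝ) : ℝ :=
  if t ≤ a then b / a * t else T - (T - b) / (L - a) * (L - t)

theorem sideDilation_sub_self_mem_Icc {a b L T lo hi t : ℝ} (ha : 0 < a) (haL : a < L)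
    (h0 : 0 ∈ Icc lo hi) (hb : b - a ∈ Icc lo hi) (hT : T - L ∈ Icc lo hi)
    (ht : t ∈ Icc 0 L) : sideDilation a b L T t - t ∈ Icc lo hi := by
  unfold sideDilation
  split_ifs with hta
  · have hθ : t / a ∈ Icc (0 : ℝ) 1 := ⟨div_nonneg ht.1 ha.le, div_le_one_of_le₀ hta ha.le⟩
    convert (convex_Icc lo hi).add_smul_sub_mem h0 hb hθ using 1
    simp only [smul_eq_mul]
    field_simp
    ring
  · have hLa : 0 < L - a := sub_pos.mpr haL
    have hθ : (L - t) / (L - a) ∈ Icc (0 : ℝ) 1 :=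
      ⟨div_nonneg (sub_nonneg.mpr ht.2) hLa.le, div_le_one_of_le₀ (by linarith) hLa.le⟩
    convert (convex_Icc lo hi).add_smul_sub_mem hT hb hθ using 1
    simp only [smul_eq_mul]
    field_simp
    ring

theorem abs_abs_sub_sub_abs_sub_le_of_sub_mem_Icc {f : ℝ → ℝ} {s t lo hi : ℝ}
    (hs : f s - s ∈ Icc lo hi) (ht : f t - t ∈ Icc lo hi) :
    |(|f s - f t| - |s - t|)| ≤ hi - lo :=
  calc |(|f s - f t| - |s - t|)|
      ≤ |(f s - s) - (f t - t)| := by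
        rw [show (f s - s) - (f t - t) = (f s - f t) - (s - t) by ring]
        exact abs_abs_sub_abs_le_abs_sub _ _
    _ ≤ hi - lo := abs_sub_le_of_le_of_le hs.1 hs.2 ht.1 ht.2

/-- The side `[x₁x₂]` is parametrized by an arclength geodesic `γ : [0,L] → X`; the
tripod `[p(x₁)p(x₂)p(x₃)]` in the approximating tree has side `[p(x₁)p(x₂)]` of length
`t₁₂`, branch point at distance `β` from `p(x₁)`, and the internal point of the triangle
side is at distance `α` from `x₁`. The map `p_Δ` on the side is the piecewise dilation
`f` matching the internal point to the branch point; the distance in the tree between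
images is `|f s - f t|`. -/
theorem stmt18_general {X : Type*} [MetricSpace X] (c δ : ℝ)
    (x₁ x₂ x₃ : X) (L : ℝ) (hL : L = dist x₁ x₂)
    (γ : ℝ → X)
    (hγ : ∀ s ∈ Icc (0:ℝ) L, ∀ t ∈ Icc (0:ℝ) L, dist (γ s) (γ t) = |s - t|)
    -- tree distances between the images `p(x₁), p(x₂), p(x₃)`
    (t₁₂ t₁₃ t₂₃ : ℝ)
    -- the Gromov approximating tree estimates
    (h₁₂ : dist x₁ x₂ - 2 * c * δ ≤ t₁₂ ∧ t₁₂ ≤ dist x₁ x₂)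
    (h₁₃ : dist x₁ x₃ - 2 * c * δ ≤ t₁₃ ∧ t₁₃ ≤ dist x₁ x₃)
    (h₂₃ : dist x₂ x₃ - 2 * c * δ ≤ t₂₃ ∧ t₂₃ ≤ dist x₂ x₃)
    (α β : ℝ)
    (hα : α = (dist x₁ x₂ + dist x₁ x₃ - dist x₂ x₃) / 2)
    (hβ : β = (t₁₂ + t₁₃ - t₂₃) / 2)
    (hα0 : 0 < α) (hαL : α < L)
    (f : ℝ → ℝ)
    (hf : ∀ t : ℝ, f t =
      if t ≤ α then (β / α) * t
      else t₁₂ - ((t₁₂ - β) / (L - α)) * (L - t)) :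
    ∀ s ∈ Icc (0:ℝ) L, ∀ t ∈ Icc (0:ℝ) L,
      dist (γ s) (γ t) - 4 * c * δ ≤ |f s - f t| ∧
      |f s - f t| ≤ dist (γ s) (γ t) + 4 * c * δ := by
  have h0 : (0 : ℝ) ∈ Icc (-(2 * c * δ)) (2 * c * δ) := ⟨by linarith, by linarith⟩
  have hβα : β - α ∈ Icc (-(2 * c * δ)) (2 * c * δ) := by
    subst hα hβ; constructor <;> linarith
  have ht₁₂L : t₁₂ - L ∈ Icc (-(2 * c * δ)) (2 * c * δ) := by
    subst hL; constructor <;> linarith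
  have hdisp : ∀ t ∈ Icc (0:ℝ) L, f t - t ∈ Icc (-(2 * c * δ)) (2 * c * δ) := fun t ht =>
    hf t ▸ sideDilation_sub_self_mem_Icc hα0 hαL h0 hβα ht₁₂L ht
  intro s hs t ht
  have key := abs_abs_sub_sub_abs_sub_le_of_sub_mem_Icc (hdisp s hs) (hdisp t ht)
  rw [hγ s hs t ht]
  constructor <;> linarith [abs_le.mp key]

/-- The restriction of the comparison map `p_Δ` to a side of a triangle is a
`(1, 4cδ)`-quasi-isometric embedding.  The side `[x₁x₂]` is parametrized by an
arclength geodesic `γ : [0,L] → X`; the tripod `[p(x₁)p(x₂)p(x₃)]` in the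
approximating tree has side `[p(x₁)p(x₂)]` of length `t₁₂`, branch point at
distance `β` from `p(x₁)`, and the internal point of the triangle side is at
distance `α` from `x₁`.  The map `p_Δ` on the side is the piecewise dilation
`f` matching the internal point to the branch point; the distance in the tree
between images is `|f s - f t|`. -/
theorem stmt18 {X : Type*} [MetricSpace X] (c δ : ℝ) (hc : 0 ≤ c) (hδ : 0 ≤ δ)
    (x₁ x₂ x₃ : X) (L : ℝ) (hL : L = dist x₁ x₂)
    (γ : ℝ → X) (hγ0 : γ 0 = x₁) (hγL : γ L = x₂)
    (hγ : ∀ s ∈ Icc (0:ℝ) L, ∀ t ∈ Icc (0:ℝ) L, dist (γ s) (γ t) = |s - t|)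
    -- tree distances between the images `p(x₁), p(x₂), p(x₃)`
    (t₁₂ t₁₃ t₂₃ : ℝ)
    (ht₁₂ : 0 ≤ t₁₂) (ht₁₃ : 0 ≤ t₁₃) (ht₂₃ : 0 ≤ t₂₃)
    (htri₁ : t₁₂ ≤ t₁₃ + t₂₃) (htri₂ : t₁₃ ≤ t₁₂ + t₂₃)
    (htri₃ : t₂₃ ≤ t₁₂ + t₁₃)
    -- the Gromov approximating tree estimates
    (h₁₂ : dist x₁ x₂ - 2 * c * δ ≤ t₁₂ ∧ t₁₂ ≤ dist x₁ x₂)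
    (h₁₃ : dist x₁ x₃ - 2 * c * δ ≤ t₁₃ ∧ t₁₃ ≤ dist x₁ x₃)
    (h₂₃ : dist x₂ x₃ - 2 * c * δ ≤ t₂₃ ∧ t₂₃ ≤ dist x₂ x₃)
    (α β : ℝ)
    (hα : α = (dist x₁ x₂ + dist x₁ x₃ - dist x₂ x₃) / 2)
    (hβ : β = (t₁₂ + t₁₃ - t₂₃) / 2)
    (hα0 : 0 < α) (hαL : α < L)
    (f : ℝ → ℝ)
    (hf : ∀ t : ℝ, f t =
      if t ≤ α then (β / α) * t
      else t₁₂ - ((t₁₂ - β) / (L - α)) * (L - t)) :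
    ∀ s ∈ Icc (0:ℝ) L, ∀ t ∈ Icc (0:ℝ) L,
      dist (γ s) (γ t) - 4 * c * δ ≤ |f s - f t| ∧
      |f s - f t| ≤ dist (γ s) (γ t) + 4 * c * δ :=
  stmt18_general c δ x₁ x₂ x₃ L hL γ hγ t₁₂ t₁₃ t₂₃ h₁₂ h₁₃ h₂₃ α β hα hβ hα0 hαL f hf
end
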